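/- arXiv:2002.07690 — 2 statements merged into one kernel-verified Lean document; each statement's English description precedes it below -/
import Mathlib

section
/- In M, for all natural numbers n, k with n ≥ 1 and 0 ≤ k ≤ n, the equality y·xⁿyᵏ = x^{n−1}yⁿx^{n−k} holds. -/
/-- The formal inverse of a word over `{x, y}` (with `x = true`, `y = false`):
reverse the word and interchange the two letters. -/
def winv (w : FreeMonoid Bool) : FreeMonoid Bool :=
  FreeMonoid.ofList ((FreeMonoid.toList w).reverse.map Bool.not)

/-- The defining relations of the free monogenic inverse monoid. -/
inductive FIMRel1 : FreeMonoid Bool → FreeMonoid Bool → Prop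
  | idem (w : FreeMonoid Bool) : FIMRel1 (w * winv w * w) w
  | comm (w z : FreeMonoid Bool) :
      FIMRel1 (w * winv w * (z * winv z)) (z * winv z * (w * winv w))

/-- The free monogenic inverse monoid. -/
abbrev FIM1 := (conGen FIMRel1).Quotient

/-- The generator `x` of the free monogenic inverse monoid. -/
def mx : FIM1 := (conGen FIMRel1).mk' (FreeMonoid.of true)

/-- The (generalized) inverse `y` of the generator. -/
def my : FIM1 := (conGen FIMRel1).mk' (FreeMonoid.of false)

/-- Generator relations descend to equalities in the quotient. -/
lemma mk_eq_of_rel {a b : FreeMonoid Bool} (h : FIMRel1 a b) :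
    (conGen FIMRel1).mk' a = (conGen FIMRel1).mk' b :=
  (Con.eq _).mpr (ConGen.Rel.of a b h)

lemma winv_mul (a b : FreeMonoid Bool) : winv (a * b) = winv b * winv a := by
  simp [winv, FreeMonoid.toList_mul]

lemma winv_pow_true (n : ℕ) : winv ((FreeMonoid.of true)^n) = (FreeMonoid.of false)^n := by
  induction n with
  | zero => rfl
  | succ m ih => rw [pow_succ, winv_mul, ih, pow_succ']; rfl

lemma winv_pow_false (n : ℕ) : winv ((FreeMonoid.of false)^n) = (FreeMonoid.of true)^n := by
  induction n with
  | zero => rfl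
  | succ m ih => rw [pow_succ, winv_mul, ih, pow_succ']; rfl

lemma P1 (n : ℕ) : mx^n * my^n * mx^n = mx^n := by
  have h := mk_eq_of_rel (FIMRel1.idem ((FreeMonoid.of true)^n))
  rw [winv_pow_true] at h
  simp only [map_mul, map_pow] at h; exact h

lemma P2 (n : ℕ) : my^n * mx^n * my^n = my^n := by
  have h := mk_eq_of_rel (FIMRel1.idem ((FreeMonoid.of false)^n))
  rw [winv_pow_false] at h
  simp only [map_mul, map_pow] at h; exact h

lemma Cm (a b : ℕ) : my^b * mx^b * (mx^a * my^a) = mx^a * my^a * (my^b * mx^b) := by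
  have h := mk_eq_of_rel (FIMRel1.comm ((FreeMonoid.of false)^b) ((FreeMonoid.of true)^a))
  rw [winv_pow_true, winv_pow_false] at h
  simp only [map_mul, map_pow] at h; exact h

lemma hyxy : my * (mx * my) = my := by
  have h := P2 1
  simpa [mul_assoc] using h

lemma LL (m : ℕ) : my * (mx^(m+1) * my^(m+1)) = mx^m * my^(m+1) := by
  have c := Cm m 1
  calc my * (mx^(m+1) * my^(m+1))
      = my^1 * mx^1 * (mx^m * my^m) * my := by
        rw [pow_succ' mx m, pow_succ my m]; simp [mul_assoc]
    _ = mx^m * my^m * (my^1 * mx^1) * my := by rw [c]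
    _ = mx^m * my^(m+1) := by
        rw [pow_succ my m]; simp [pow_one, mul_assoc, hyxy]

lemma SS (k d : ℕ) : my^(k+d) * mx^(k+d) * my^k = my^(k+d) * mx^d := by
  have c := Cm k d
  calc my^(k+d) * mx^(k+d) * my^k
      = my^k * (my^d * mx^d * (mx^k * my^k)) := by
        rw [pow_add my, add_comm k d, pow_add mx]; simp [mul_assoc]
    _ = my^k * (mx^k * my^k * (my^d * mx^d)) := by rw [c]
    _ = my^k * mx^k * my^k * (my^d * mx^d) := by simp [mul_assoc]
    _ = my^k * (my^d * mx^d) := by rw [P2 k]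
    _ = my^(k+d) * mx^d := by rw [pow_add my]; simp [mul_assoc]

/-- For `n ≥ 1` and `0 ≤ k ≤ n`: `y·xⁿyᵏ = x^{n−1}yⁿx^{n−k}` in `M`. -/
theorem rel_two (n k : ℕ) (hn : 1 ≤ n) (hk : k ≤ n) :
    my * (mx ^ n * my ^ k) = mx ^ (n - 1) * my ^ n * mx ^ (n - k) := by
  obtain ⟨m, rfl⟩ : ∃ m, n = m + 1 := ⟨n - 1, by omega⟩
  obtain ⟨d, hd⟩ : ∃ d, m + 1 = k + d := ⟨m + 1 - k, by omega⟩
  have hn1 : m + 1 - 1 = m := by omega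
  have hnk : m + 1 - k = d := by omega
  rw [hn1, hnk]
  calc my * (mx^(m+1) * my^k)
      = my * (mx^(m+1) * my^(m+1)) * (mx^(m+1) * my^k) := by
        conv_lhs => rw [← P1 (m+1)]
        simp [mul_assoc]
    _ = mx^m * my^(m+1) * (mx^(m+1) * my^k) := by rw [LL m]
    _ = mx^m * (my^(m+1) * mx^(m+1) * my^k) := by simp [mul_assoc]
    _ = mx^m * (my^(k+d) * mx^d) := by rw [hd, SS k d]
    _ = mx^m * my^(m+1) * mx^d := by rw [hd, mul_assoc]
end

section
/- In M, for all n, k with 0 ≤ n < k, the elements xⁿyᵏxᵏ and x^{n+1}y^{k+1}x^{k+1} lie in different strongly connected components of the right Cayley graph: there is no w ∈ M with x^{n+1}y^{k+1}x^{k+1}·w = xⁿyᵏxᵏ. -/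
@[ext] structure Tri where
  lo : ℤ
  e : ℤ
  hi : ℤ
  lo_nonpos : lo ≤ 0
  lo_le_e : lo ≤ e
  hi_nonneg : 0 ≤ hi
  e_le_hi : e ≤ hi

instance : One Tri := ⟨⟨0, 0, 0, le_refl 0, le_refl 0, le_refl 0, le_refl 0⟩⟩
instance : Mul Tri := ⟨fun a b =>
  ⟨min a.lo (a.e + b.lo), a.e + b.e, max a.hi (a.e + b.hi),
    by have := a.lo_nonpos; omega,
    by have := a.lo_le_e; have := b.lo_le_e; omega,
    by have := a.hi_nonneg; omega,
    by have := a.e_le_hi; have := b.e_le_hi; omega⟩⟩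

@[simp] lemma Tri.one_lo : (1 : Tri).lo = 0 := rfl
@[simp] lemma Tri.one_e : (1 : Tri).e = 0 := rfl
@[simp] lemma Tri.one_hi : (1 : Tri).hi = 0 := rfl
@[simp] lemma Tri.mul_lo (a b : Tri) : (a * b).lo = min a.lo (a.e + b.lo) := rfl
@[simp] lemma Tri.mul_e (a b : Tri) : (a * b).e = a.e + b.e := rfl
@[simp] lemma Tri.mul_hi (a b : Tri) : (a * b).hi = max a.hi (a.e + b.hi) := rfl

instance : Monoid Tri where
  mul_assoc a b c := by ext <;> simp <;> omega
  one_mul a := by ext <;> simp [a.lo_nonpos, a.hi_nonneg]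
  mul_one a := by ext <;> simp [a.lo_le_e, a.e_le_hi]

def fstep : Bool → Tri
  | true => ⟨0, 1, 1, by norm_num, by norm_num, by norm_num, by norm_num⟩
  | false => ⟨-1, -1, 0, by norm_num, by norm_num, by norm_num, by norm_num⟩

@[simp] lemma fstep_true_lo : (fstep true).lo = 0 := rfl
@[simp] lemma fstep_true_e : (fstep true).e = 1 := rfl
@[simp] lemma fstep_true_hi : (fstep true).hi = 1 := rfl
@[simp] lemma fstep_false_lo : (fstep false).lo = -1 := rfl
@[simp] lemma fstep_false_e : (fstep false).e = -1 := rfl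
@[simp] lemma fstep_false_hi : (fstep false).hi = 0 := rfl

def φ : FreeMonoid Bool →* Tri := FreeMonoid.lift fstep


lemma winv_of_mul (a : Bool) (w : FreeMonoid Bool) :
    winv (FreeMonoid.of a * w) = winv w * FreeMonoid.of (!a) := by
  apply FreeMonoid.toList.injective
  simp [winv, FreeMonoid.toList_of_mul, FreeMonoid.toList_mul, FreeMonoid.toList_ofList,
    FreeMonoid.toList_of]
lemma phi_winv (w : FreeMonoid Bool) :
    (φ (winv w)).lo = (φ w).lo - (φ w).e ∧ (φ (winv w)).e = -(φ w).e ∧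
      (φ (winv w)).hi = (φ w).hi - (φ w).e := by
  induction w using FreeMonoid.recOn with
  | one => simp [winv, φ]
  | of_mul a w ih =>
    obtain ⟨h1, h2, h3⟩ := ih
    rw [winv_of_mul]
    cases a <;>
      simp_all [φ, fstep, FreeMonoid.lift_eval_of] <;> omega

lemma rel_le : conGen FIMRel1 ≤ Con.ker φ := by
  apply Con.conGen_le.mpr
  intro a b hab
  induction hab with
  | idem w =>
    obtain ⟨h1, h2, h3⟩ := phi_winv w
    rw [Con.ker_rel, map_mul, map_mul]
    ext <;> simp [h1, h2, h3] <;> omega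
  | comm w z =>
    obtain ⟨h1, h2, h3⟩ := phi_winv w
    obtain ⟨g1, g2, g3⟩ := phi_winv z
    rw [Con.ker_rel]
    simp only [map_mul]
    ext <;> simp [h1, h2, h3, g1, g2, g3] <;> omega

def ψ : FIM1 →* Tri := Con.lift _ φ rel_le

lemma psi_mx : ψ mx = fstep true := by
  simp [ψ, mx, φ, Con.lift_mk']

lemma psi_my : ψ my = fstep false := by
  simp [ψ, my, φ, Con.lift_mk']

lemma pow_x (m : ℕ) : ((fstep true) ^ m).lo = 0 ∧ ((fstep true) ^ m).e = m ∧
    ((fstep true) ^ m).hi = m := by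
  induction m with
  | zero => simp
  | succ m ih =>
    obtain ⟨h1, h2, h3⟩ := ih
    rw [pow_succ]
    refine ⟨?_, ?_, ?_⟩ <;> simp [h1, h2, h3] <;> omega

lemma pow_y (m : ℕ) : ((fstep false) ^ m).lo = -m ∧ ((fstep false) ^ m).e = -m ∧
    ((fstep false) ^ m).hi = 0 := by
  induction m with
  | zero => simp
  | succ m ih =>
    obtain ⟨h1, h2, h3⟩ := ih
    rw [pow_succ]
    refine ⟨?_, ?_, ?_⟩ <;> simp [h1, h2, h3] <;> omega

/-- For `0 ≤ n < k`, the elements `xⁿyᵏxᵏ` and `x^{n+1}y^{k+1}x^{k+1}` lie in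
different strongly connected components of the right Cayley graph of `M`:
there is no `w` with `x^{n+1}y^{k+1}x^{k+1}·w = xⁿyᵏxᵏ`. -/
theorem transition_edge (n k : ℕ) (h : n < k) :
    ¬ ∃ w : FIM1, mx ^ (n + 1) * my ^ (k + 1) * mx ^ (k + 1) * w = mx ^ n * my ^ k * mx ^ k := by
  rintro ⟨w, hw⟩
  have := congrArg (fun z => (ψ z).hi) hw
  simp only [map_mul, map_pow, psi_mx, psi_my, Tri.mul_hi, Tri.mul_e] at this
  obtain ⟨x1, x2, x3⟩ := pow_x (n+1)
  obtain ⟨y1, y2, y3⟩ := pow_y (k+1)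
  obtain ⟨x1', x2', x3'⟩ := pow_x (k+1)
  obtain ⟨a1, a2, a3⟩ := pow_x n
  obtain ⟨b1, b2, b3⟩ := pow_y k
  obtain ⟨c1, c2, c3⟩ := pow_x k
  simp only [x1, x2, x3, y1, y2, y3, x1', x2', x3', a1, a2, a3, b1, b2, b3, c1, c2, c3] at this
  push_cast at this
  have hnn := (ψ w).hi_nonneg
  omega
end
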